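/- A local POE model equals a base POE model: for transformations H₁,...,H_{n+1} ∈ SE(3) and normalized twists ξ̄₁^{H₁},...,ξ̄ₙ^{Hₙ}, the product H₁ exp(ξ̂₁^{H₁}q₁) H₂ exp(ξ̂₂^{H₂}q₂) ⋯ Hₙ exp(ξ̂ₙ^{Hₙ}qₙ) H_{n+1} equals exp(ξ̂₁q₁) exp(ξ̂₂q₂) ⋯ exp(ξ̂ₙqₙ) · H_T, where ξᵢ = Ad(H₁H₂⋯Hᵢ) ξᵢ^{Hᵢ} and H_T = H₁H₂⋯H_{n+1}. (It suffices to prove the case n = 2.) -/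

import Mathlib

open Matrix Real

noncomputable section

/-- Skew-symmetric matrix of a 3-vector. -/
def skew (w : Fin 3 → ℝ) : Matrix (Fin 3) (Fin 3) ℝ :=
  !![0, -w 2, w 1; w 2, 0, -w 0; -w 1, w 0, 0]

/-- 4×4 twist matrix of twist coordinates (ω, v). -/
def twistM (w v : Fin 3 → ℝ) : Matrix (Fin 4) (Fin 4) ℝ :=
  !![0, -w 2, w 1, v 0;
     w 2, 0, -w 0, v 1;
     -w 1, w 0, 0, v 2;
     0, 0, 0, 0]

/-- Homogeneous transformation [[R,t],[0,1]]. -/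
def homog (R : Matrix (Fin 3) (Fin 3) ℝ) (t : Fin 3 → ℝ) : Matrix (Fin 4) (Fin 4) ℝ :=
  !![R 0 0, R 0 1, R 0 2, t 0;
     R 1 0, R 1 1, R 1 2, t 1;
     R 2 0, R 2 1, R 2 2, t 2;
     0, 0, 0, 1]

def isSO3 (R : Matrix (Fin 3) (Fin 3) ℝ) : Prop := R * Rᵀ = 1 ∧ R.det = 1

def isSE3 (H : Matrix (Fin 4) (Fin 4) ℝ) : Prop :=
  ∃ R t, isSO3 R ∧ H = homog R t

def isTwist (X : Matrix (Fin 4) (Fin 4) ℝ) : Prop := ∃ w v, X = twistM w v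

def RZ (θ : ℝ) : Matrix (Fin 4) (Fin 4) ℝ :=
  homog !![Real.cos θ, -Real.sin θ, 0; Real.sin θ, Real.cos θ, 0; 0, 0, 1] ![0, 0, 0]

def TZ (d : ℝ) : Matrix (Fin 4) (Fin 4) ℝ := homog 1 ![0, 0, d]

def RX (α : ℝ) : Matrix (Fin 4) (Fin 4) ℝ :=
  homog !![1, 0, 0; 0, Real.cos α, -Real.sin α; 0, Real.sin α, Real.cos α] ![0, 0, 0]

def TX (a : ℝ) : Matrix (Fin 4) (Fin 4) ℝ := homog 1 ![a, 0, 0]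

/-- Rotation block of a 4×4 homogeneous transformation. -/
def rotOf (H : Matrix (Fin 4) (Fin 4) ℝ) : Matrix (Fin 3) (Fin 3) ℝ :=
  fun i j => H i.castSucc j.castSucc

/-- Translation column of a 4×4 homogeneous transformation. -/
def transOf (H : Matrix (Fin 4) (Fin 4) ℝ) : Fin 3 → ℝ :=
  fun i => H i.castSucc 3

/-- The adjoint action Ad(H) of a homogeneous transformation on twist
coordinates (ω, v) ∈ ℝ³ × ℝ³, given by (Rω, t̂Rω + Rv). -/
def AdAct (H : Matrix (Fin 4) (Fin 4) ℝ) (ξ : (Fin 3 → ℝ) × (Fin 3 → ℝ)) :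
    (Fin 3 → ℝ) × (Fin 3 → ℝ) :=
  (rotOf H *ᵥ ξ.1, skew (transOf H) *ᵥ (rotOf H *ᵥ ξ.1) + rotOf H *ᵥ ξ.2)

/-! Every `H ∈ SE(3)` intertwines twists with their adjoint images, `H ξ̂ = (Ad_H ξ)^ H`,
hence `H exp(q ξ̂) = exp(q (Ad_H ξ)^) H`. Pushing `H₁` past the first exponential and then
`H₁H₂` past the second turns the local product into the base one. The rotational part of the
intertwining, `(Rω)^ R = R ω̂`, is the cofactor identity for `R`, since `adj R = Rᵀ` on `SO(3)`. -/

def blockMat (A : Matrix (Fin 3) (Fin 3) ℝ) (a : Fin 3 → ℝ) (s : ℝ) :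
    Matrix (Fin 4) (Fin 4) ℝ :=
  !![A 0 0, A 0 1, A 0 2, a 0;
     A 1 0, A 1 1, A 1 2, a 1;
     A 2 0, A 2 1, A 2 2, a 2;
     0, 0, 0, s]

lemma homog_eq_blockMat (R : Matrix (Fin 3) (Fin 3) ℝ) (t : Fin 3 → ℝ) :
    homog R t = blockMat R t 1 := rfl

lemma twistM_eq_blockMat (ω v : Fin 3 → ℝ) : twistM ω v = blockMat (skew ω) v 0 := by
  ext i j
  fin_cases i <;> fin_cases j <;> rfl

lemma blockMat_mul (A B : Matrix (Fin 3) (Fin 3) ℝ) (a b : Fin 3 → ℝ) (s r : ℝ) :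
    blockMat A a s * blockMat B b r = blockMat (A * B) (A *ᵥ b + r • a) (s * r) := by
  ext i j
  fin_cases i <;> fin_cases j <;>
    simp [blockMat, Matrix.mul_apply, Matrix.mulVec, dotProduct, Fin.sum_univ_four,
      Fin.sum_univ_three] <;> ring

lemma homog_mul (R S : Matrix (Fin 3) (Fin 3) ℝ) (t u : Fin 3 → ℝ) :
    homog R t * homog S u = homog (R * S) (R *ᵥ u + t) := by
  simp only [homog_eq_blockMat, blockMat_mul, one_smul, mul_one]

lemma rotOf_homog (R : Matrix (Fin 3) (Fin 3) ℝ) (t : Fin 3 → ℝ) : rotOf (homog R t) = R := by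
  ext i j
  fin_cases i <;> fin_cases j <;> rfl

lemma transOf_homog (R : Matrix (Fin 3) (Fin 3) ℝ) (t : Fin 3 → ℝ) :
    transOf (homog R t) = t := by
  ext i
  fin_cases i <;> rfl

lemma AdAct_homog (R : Matrix (Fin 3) (Fin 3) ℝ) (t ω v : Fin 3 → ℝ) :
    AdAct (homog R t) (ω, v) = (R *ᵥ ω, skew t *ᵥ (R *ᵥ ω) + R *ᵥ v) := by
  rw [AdAct, rotOf_homog, transOf_homog]

lemma skew_mulVec (a b : Fin 3 → ℝ) : skew a *ᵥ b = a ⨯₃ b := by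
  ext i
  fin_cases i <;>
    simp [skew, cross_apply, Matrix.mulVec, dotProduct, Fin.sum_univ_three] <;> ring

/-- The cofactor identity `(R a) × (R b) = adj(Rᵀ) (a × b)`, in matrix form. -/
lemma skew_mulVec_mul_eq_adjugate_mul (R : Matrix (Fin 3) (Fin 3) ℝ) (ω : Fin 3 → ℝ) :
    skew (R *ᵥ ω) * R = (Rᵀ).adjugate * skew ω := by
  rw [Matrix.adjugate_fin_three]
  ext i j
  fin_cases i <;> fin_cases j <;>
    simp [skew, Matrix.mul_apply, Matrix.mulVec, dotProduct, Fin.sum_univ_three] <;> ring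

lemma isSO3.adjugate_eq_transpose {R : Matrix (Fin 3) (Fin 3) ℝ} (hR : isSO3 R) :
    R.adjugate = Rᵀ :=
  calc R.adjugate = R.adjugate * R * Rᵀ := by rw [mul_assoc, hR.1, mul_one]
    _ = Rᵀ := by rw [Matrix.adjugate_mul, hR.2, one_smul, one_mul]

lemma isSO3.skew_mulVec_mul {R : Matrix (Fin 3) (Fin 3) ℝ} (hR : isSO3 R) (ω : Fin 3 → ℝ) :
    skew (R *ᵥ ω) * R = R * skew ω := by
  rw [skew_mulVec_mul_eq_adjugate_mul, ← Matrix.adjugate_transpose, hR.adjugate_eq_transpose,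
    Matrix.transpose_transpose]

lemma isSO3.mul {R S : Matrix (Fin 3) (Fin 3) ℝ} (hR : isSO3 R) (hS : isSO3 S) :
    isSO3 (R * S) := by
  refine ⟨?_, by rw [Matrix.det_mul, hR.2, hS.2, one_mul]⟩
  rw [Matrix.transpose_mul, mul_assoc, ← mul_assoc S, hS.1, one_mul, hR.1]

lemma isSE3.mul {H K : Matrix (Fin 4) (Fin 4) ℝ} (hH : isSE3 H) (hK : isSE3 K) :
    isSE3 (H * K) := by
  obtain ⟨R, t, hR, rfl⟩ := hH
  obtain ⟨S, u, hS, rfl⟩ := hK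
  exact ⟨R * S, R *ᵥ u + t, hR.mul hS, homog_mul R S t u⟩

lemma homog_mul_twistM {R : Matrix (Fin 3) (Fin 3) ℝ} (hR : isSO3 R) (t ω v : Fin 3 → ℝ) :
    homog R t * twistM ω v =
      twistM (R *ᵥ ω) (skew t *ᵥ (R *ᵥ ω) + R *ᵥ v) * homog R t := by
  have hcross : skew (R *ᵥ ω) *ᵥ t + skew t *ᵥ (R *ᵥ ω) = 0 := by
    rw [skew_mulVec, skew_mulVec, cross_anticomm']
  simp only [homog_eq_blockMat, twistM_eq_blockMat, blockMat_mul, hR.skew_mulVec_mul,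
    zero_smul, one_smul, add_zero, zero_mul, mul_zero, ← add_assoc, hcross, zero_add]

lemma isSE3.semiconjBy_twistM {H : Matrix (Fin 4) (Fin 4) ℝ} (hH : isSE3 H)
    (ω v : Fin 3 → ℝ) :
    SemiconjBy H (twistM ω v) (twistM (AdAct H (ω, v)).1 (AdAct H (ω, v)).2) := by
  obtain ⟨R, t, hR, rfl⟩ := hH
  rw [AdAct_homog]
  exact homog_mul_twistM hR t ω v

lemma isSE3.mul_exp_smul_twistM {H : Matrix (Fin 4) (Fin 4) ℝ} (hH : isSE3 H)
    (ω v : Fin 3 → ℝ) (q : ℝ) :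
    H * NormedSpace.exp (q • twistM ω v) =
      NormedSpace.exp (q • twistM (AdAct H (ω, v)).1 (AdAct H (ω, v)).2) * H :=
  open scoped Norms.Operator in ((hH.semiconjBy_twistM ω v).smul_right q).exp_right

theorem local_poe_eq_base_poe_general (H₁ H₂ H₃ : Matrix (Fin 4) (Fin 4) ℝ)
    (h₁ : isSE3 H₁) (h₂ : isSE3 H₂)
    (ω₁ v₁ ω₂ v₂ : Fin 3 → ℝ) (q₁ q₂ : ℝ) :
    H₁ * NormedSpace.exp (q₁ • twistM ω₁ v₁) * H₂ *
        NormedSpace.exp (q₂ • twistM ω₂ v₂) * H₃ =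
      NormedSpace.exp
          (q₁ • twistM (AdAct H₁ (ω₁, v₁)).1 (AdAct H₁ (ω₁, v₁)).2) *
        NormedSpace.exp
          (q₂ • twistM (AdAct (H₁ * H₂) (ω₂, v₂)).1 (AdAct (H₁ * H₂) (ω₂, v₂)).2) *
        (H₁ * H₂ * H₃) := by
  calc H₁ * NormedSpace.exp (q₁ • twistM ω₁ v₁) * H₂ *
        NormedSpace.exp (q₂ • twistM ω₂ v₂) * H₃
      = NormedSpace.exp (q₁ • twistM (AdAct H₁ (ω₁, v₁)).1 (AdAct H₁ (ω₁, v₁)).2) *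
          (H₁ * H₂ * NormedSpace.exp (q₂ • twistM ω₂ v₂)) * H₃ := by
        rw [h₁.mul_exp_smul_twistM]; simp only [mul_assoc]
    _ = _ := by
        rw [(h₁.mul h₂).mul_exp_smul_twistM]; simp only [mul_assoc]

/-- a local POE model equals a base POE model (case n = 2):
H₁ e^{ξ̂₁q₁} H₂ e^{ξ̂₂q₂} H₃ = e^{ξ̂₁′q₁} e^{ξ̂₂′q₂} (H₁H₂H₃),
where ξ₁′ = Ad(H₁)ξ₁ and ξ₂′ = Ad(H₁H₂)ξ₂. -/
theorem local_poe_eq_base_poe (H₁ H₂ H₃ : Matrix (Fin 4) (Fin 4) ℝ)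
    (h₁ : isSE3 H₁) (h₂ : isSE3 H₂) (h₃ : isSE3 H₃)
    (ω₁ v₁ ω₂ v₂ : Fin 3 → ℝ) (q₁ q₂ : ℝ) :
    H₁ * NormedSpace.exp (q₁ • twistM ω₁ v₁) * H₂ *
        NormedSpace.exp (q₂ • twistM ω₂ v₂) * H₃ =
      NormedSpace.exp
          (q₁ • twistM (AdAct H₁ (ω₁, v₁)).1 (AdAct H₁ (ω₁, v₁)).2) *
        NormedSpace.exp
          (q₂ • twistM (AdAct (H₁ * H₂) (ω₂, v₂)).1 (AdAct (H₁ * H₂) (ω₂, v₂)).2) *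
        (H₁ * H₂ * H₃) :=
  local_poe_eq_base_poe_general H₁ H₂ H₃ h₁ h₂ ω₁ v₁ ω₂ v₂ q₁ q₂
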